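/- arXiv:1006.2240 — 2 statements merged into one kernel-verified Lean document; each statement's English description precedes it below -/
import Mathlib

section
/- Let L be a Lie algebra over a field F such that the abelianization L/L² is finite-dimensional, and let h: L × L → L⊗L be a universal Lie pairing. Then J₂(L) ≅ (L□L) × M(L) as Lie algebras; more precisely, ker κ is the internal direct sum of L□L and a Lie ideal isomorphic to the Schur multiplier M(L). -/
universe u v w x

/-- A Lie pairing `ρ : L × L → H` of Lie algebras over a field `F`:
a bilinear map satisfying the three Lie-pairing relations. -/
structure IsLiePairing (F : Type u) [Field F] {L : Type v} {H : Type w}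
    [LieRing L] [LieAlgebra F L] [LieRing H] [LieAlgebra F H]
    (ρ : L → L → H) : Prop where
  add_left : ∀ l l' k : L, ρ (l + l') k = ρ l k + ρ l' k
  add_right : ∀ l k k' : L, ρ l (k + k') = ρ l k + ρ l k'
  smul_left : ∀ (c : F) (l k : L), ρ (c • l) k = c • ρ l k
  smul_right : ∀ (c : F) (l k : L), ρ l (c • k) = c • ρ l k
  bracket_left : ∀ l l' s : L, ρ ⁅l, l'⁆ s = ρ l ⁅l', s⁆ - ρ l' ⁅l, s⁆
  bracket_right : ∀ l s s' : L, ρ l ⁅s, s'⁆ = ρ ⁅s', l⁆ s - ρ ⁅s, l⁆ s'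
  bracket_bracket : ∀ l s l' s' : L, ρ ⁅l, s⁆ ⁅l', s'⁆ = -⁅ρ s l, ρ l' s'⁆

/-- `h : L × L → T` is a universal Lie pairing: `T` plays the role of the
nonabelian tensor square `L ⊗ L`, with `h l l' = l ⊗ l'`. -/
structure IsUniversalLiePairing (F : Type u) [Field F] (L : Type v) (T : Type w)
    [LieRing L] [LieAlgebra F L] [LieRing T] [LieAlgebra F T]
    (h : L → L → T) : Prop where
  isLiePairing : IsLiePairing F h
  universal : ∀ (Q : Type (max u v w)) [LieRing Q] [LieAlgebra F Q]
      (h' : L → L → Q), IsLiePairing F h' →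
        ∃! ζ : T →ₗ⁅F⁆ Q, ∀ x y : L, ζ (h x y) = h' x y
/-- The product of two Lie rings is a Lie ring. -/
instance prodLieRing (A : Type u) (B : Type v) [LieRing A] [LieRing B] :
    LieRing (A × B) where
  bracket x y := (⁅x.1, y.1⁆, ⁅x.2, y.2⁆)
  add_lie x y z := by simp [Prod.ext_iff, add_lie]
  lie_add x y z := by simp [Prod.ext_iff, lie_add]
  lie_self x := by simp [Prod.ext_iff]
  leibniz_lie x y z := by simp [Prod.ext_iff]

/-- The product of two Lie algebras is a Lie algebra. -/
instance prodLieAlgebra (F : Type x) [Field F] (A : Type u) (B : Type v)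
    [LieRing A] [LieRing B] [LieAlgebra F A] [LieAlgebra F B] :
    LieAlgebra F (A × B) where
  lie_smul t x y := Prod.ext (lie_smul t x.1 y.1) (lie_smul t x.2 y.2)

/-! Universality forces `T` to be spanned by the elements `h l l'`: their span is a Lie
subalgebra, because `⁅h a b, h c d⁆ = h ⁅a, b⁆ ⁅c, d⁆`, and the map it receives from `T` by
universality splits the inclusion. Bilinearity then gives `⁅a, b⁆ = h (κ a) (κ b)` on all of `T`,
so `ker κ` is central. Any vector-space complement `W` of `L□L` in `ker κ` is therefore an
ideal; it maps isomorphically onto `ker κ' = ker κ / L□L`, and `ker κ ≅ L□L × W` because ideals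
with trivial intersection commute. -/

open LieAlgebra

namespace ULift

variable {R : Type*} [CommRing R] {A : Type*} [LieRing A]

instance lieRing : LieRing (ULift.{v} A) where
  bracket x y := ⟨⁅x.down, y.down⁆⟩
  add_lie x y z := ULift.ext _ _ (add_lie x.down y.down z.down)
  lie_add x y z := ULift.ext _ _ (lie_add x.down y.down z.down)
  lie_self x := ULift.ext _ _ (lie_self x.down)
  leibniz_lie x y z := ULift.ext _ _ (leibniz_lie x.down y.down z.down)

instance lieAlgebra [LieAlgebra R A] : LieAlgebra R (ULift.{v} A) where
  lie_smul t x y := ULift.ext _ _ (lie_smul t x.down y.down)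

def lieEquiv [LieAlgebra R A] : ULift.{v} A ≃ₗ⁅R⁆ A :=
  { ULift.moduleEquiv with map_lie' := rfl }

end ULift

namespace IsLiePairing

variable {F : Type u} [Field F] {L : Type v} {H : Type w} [LieRing L] [LieAlgebra F L]
  [LieRing H] [LieAlgebra F H] {ρ : L → L → H}

def toBilin (P : IsLiePairing F ρ) : L →ₗ[F] L →ₗ[F] H :=
  LinearMap.mk₂ F ρ P.add_left P.smul_left P.add_right P.smul_right

@[simp]
theorem toBilin_apply (P : IsLiePairing F ρ) (l l' : L) : P.toBilin l l' = ρ l l' := rfl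

theorem comp_lieHom {H' : Type*} [LieRing H'] [LieAlgebra F H'] (P : IsLiePairing F ρ)
    (f : H →ₗ⁅F⁆ H') : IsLiePairing F (fun l l' => f (ρ l l')) where
  add_left l l' k := by simp only [P.add_left, map_add]
  add_right l k k' := by simp only [P.add_right, map_add]
  smul_left c l k := by simp only [P.smul_left, map_smul]
  smul_right c l k := by simp only [P.smul_right, map_smul]
  bracket_left l l' s := by simp only [P.bracket_left, map_sub]
  bracket_right l s s' := by simp only [P.bracket_right, map_sub]
  bracket_bracket l s l' s' := by simp only [P.bracket_bracket, map_neg, LieHom.map_lie]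

theorem of_comp_injective {H' : Type*} [LieRing H'] [LieAlgebra F H'] (f : H →ₗ⁅F⁆ H')
    (hf : Function.Injective f) (P : IsLiePairing F (fun l l' => f (ρ l l'))) :
    IsLiePairing F ρ where
  add_left l l' k := hf <| by simpa only [map_add] using P.add_left l l' k
  add_right l k k' := hf <| by simpa only [map_add] using P.add_right l k k'
  smul_left c l k := hf <| by simpa only [map_smul] using P.smul_left c l k
  smul_right c l k := hf <| by simpa only [map_smul] using P.smul_right c l k
  bracket_left l l' s := hf <| by simpa only [map_sub] using P.bracket_left l l' s
  bracket_right l s s' := hf <| by simpa only [map_sub] using P.bracket_right l s s'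
  bracket_bracket l s l' s' := hf <| by
    simpa only [map_neg, LieHom.map_lie] using P.bracket_bracket l s l' s'

theorem lie_apply_apply (P : IsLiePairing F ρ) (a b c d : L) :
    ⁅ρ a b, ρ c d⁆ = ρ ⁅a, b⁆ ⁅c, d⁆ := by
  rw [← lie_skew a b, ← P.toBilin_apply (-⁅b, a⁆), map_neg, LinearMap.neg_apply,
    P.toBilin_apply, P.bracket_bracket, neg_neg]

def spanRange (P : IsLiePairing F ρ) : LieSubalgebra F H where
  toSubmodule := Submodule.span F (Set.range (Function.uncurry ρ))
  lie_mem' {x y} hx hy := by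
    have hxy :=
      Submodule.apply_mem_map₂ (LieModule.toEnd F H H : H →ₗ[F] Module.End F H) hx hy
    rw [Submodule.map₂_span_span] at hxy
    refine Submodule.span_mono ?_ hxy
    rintro _ ⟨_, ⟨⟨a, b⟩, rfl⟩, _, ⟨⟨c, d⟩, rfl⟩, rfl⟩
    exact ⟨(⁅a, b⁆, ⁅c, d⁆), (P.lie_apply_apply a b c d).symm⟩

end IsLiePairing

namespace IsUniversalLiePairing

variable {F : Type u} [Field F] {L : Type v} {T : Type w} [LieRing L] [LieAlgebra F L]
  [LieRing T] [LieAlgebra F T] {h : L → L → T}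

theorem hom_ext (hh : IsUniversalLiePairing F L T h) {Q : Type (max u v w)} [LieRing Q]
    [LieAlgebra F Q] {f g : T →ₗ⁅F⁆ Q} (hfg : ∀ x y, f (h x y) = g (h x y)) : f = g :=
  (hh.universal Q _ (hh.isLiePairing.comp_lieHom g)).unique hfg fun _ _ => rfl

theorem span_range_eq_top (hh : IsUniversalLiePairing F L T h) :
    Submodule.span F (Set.range (Function.uncurry h)) = ⊤ := by
  -- The universal property only reaches targets in `Type (max u v w)`, hence the `ULift`.
  let S := hh.isLiePairing.spanRange
  let ι : ULift.{max u v} S →ₗ⁅F⁆ T := S.incl.comp ULift.lieEquiv.toLieHom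
  have hι : Function.Injective ι := Subtype.val_injective.comp ULift.down_injective
  let ρ : L → L → ULift.{max u v} S := fun x y =>
    ULift.up ⟨h x y, Submodule.subset_span ⟨(x, y), rfl⟩⟩
  obtain ⟨ζ, hζ, -⟩ :=
    hh.universal _ ρ <| IsLiePairing.of_comp_injective ι hι hh.isLiePairing
  have hιζ : (ULift.lieEquiv.symm.toLieHom.comp (ι.comp ζ) : T →ₗ⁅F⁆ ULift.{max u v} T) =
      ULift.lieEquiv.symm.toLieHom := hh.hom_ext fun x y => by
    simp only [LieHom.comp_apply, hζ]; rfl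
  refine eq_top_iff.mpr fun t _ => ?_
  have : ι (ζ t) = t := congrArg ULift.down (LieHom.congr_fun hιζ t)
  exact this ▸ (ζ t).down.2

theorem lie_eq_apply (hh : IsUniversalLiePairing F L T h) (κ : T →ₗ[F] L)
    (hκ : ∀ l l', κ (h l l') = ⁅l, l'⁆) (a b : T) : ⁅a, b⁆ = h (κ a) (κ b) := by
  suffices (LieModule.toEnd F T T : T →ₗ[F] Module.End F T) =
      hh.isLiePairing.toBilin.compl₁₂ κ κ from LinearMap.congr_fun₂ this a b
  refine LinearMap.ext_on_range hh.span_range_eq_top fun p => ?_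
  refine LinearMap.ext_on_range hh.span_range_eq_top fun q => ?_
  simp only [Function.uncurry, LieHom.coe_toLinearMap, LieModule.toEnd_apply_apply,
    LinearMap.compl₁₂_apply, IsLiePairing.toBilin_apply, hκ, hh.isLiePairing.lie_apply_apply]

theorem ker_le_center (hh : IsUniversalLiePairing F L T h) (κ : T →ₗ⁅F⁆ L)
    (hκ : ∀ l l', κ (h l l') = ⁅l, l'⁆) : κ.ker ≤ center F T := fun t ht =>
  (LieModule.mem_maxTrivSubmodule F T T t).mpr fun a => by
    rw [hh.lie_eq_apply κ hκ]
    exact LieHom.mem_ker.mp ht ▸ (hh.isLiePairing.toBilin (κ a)).map_zero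

end IsUniversalLiePairing

def LieEquiv.prodCongr {R L₁ L₂ L₃ L₄ : Type*} [CommRing R] [LieRing L₁] [LieAlgebra R L₁]
    [LieRing L₂] [LieAlgebra R L₂] [LieRing L₃] [LieAlgebra R L₃] [LieRing L₄] [LieAlgebra R L₄]
    (e₁ : L₁ ≃ₗ⁅R⁆ L₃) (e₂ : L₂ ≃ₗ⁅R⁆ L₄) : (L₁ × L₂) ≃ₗ⁅R⁆ (L₃ × L₄) :=
  { LinearEquiv.prodCongr e₁.toLinearEquiv e₂.toLinearEquiv with
    map_lie' := fun {x y} => Prod.ext (e₁.map_lie x.1 y.1) (e₂.map_lie x.2 y.2) }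

namespace LieIdeal

variable {R L : Type*} [CommRing R] [LieRing L] [LieAlgebra R L]

theorem lie_eq_zero_of_inf_eq_bot {I J : LieIdeal R L} (hIJ : I ⊓ J = ⊥) {x y : L}
    (hx : x ∈ I) (hy : y ∈ J) : ⁅x, y⁆ = 0 := by
  have : ⁅x, y⁆ ∈ I ⊓ J := LieSubmodule.lie_le_inf I J (LieSubmodule.lie_mem_lie hx hy)
  rwa [hIJ, LieSubmodule.mem_bot] at this

noncomputable def supEquivProd {I J : LieIdeal R L} (hIJ : I ⊓ J = ⊥) : ↥(I ⊔ J) ≃ₗ⁅R⁆ I × J :=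
  LieEquiv.symm <| LieEquiv.ofBijective
    { toFun := fun p =>
        ⟨(p.1 : L) + p.2, (LieSubmodule.mem_sup I J _).mpr ⟨_, p.1.2, _, p.2.2, rfl⟩⟩
      map_add' := fun p q => Subtype.ext (add_add_add_comm _ _ _ _)
      map_smul' := fun c p => Subtype.ext (smul_add c _ _).symm
      map_lie' := fun {p q} => by
        apply Subtype.ext
        have h₁ := lie_eq_zero_of_inf_eq_bot hIJ p.1.2 q.2.2
        have h₂ := lie_eq_zero_of_inf_eq_bot (inf_comm I J ▸ hIJ) p.2.2 q.1.2
        change ⁅(p.1 : L), (q.1 : L)⁆ + ⁅(p.2 : L), (q.2 : L)⁆ =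
          ⁅(p.1 : L) + (p.2 : L), (q.1 : L) + (q.2 : L)⁆
        simp only [add_lie, lie_add, h₁, h₂, add_zero, zero_add] }
    ⟨(injective_iff_map_eq_zero _).mpr fun p hp => by
      have hp' : (p.1 : L) = -p.2 := eq_neg_of_add_eq_zero_left (congrArg Subtype.val hp)
      have hI : (p.1 : L) ∈ I ⊓ J := ⟨p.1.2, hp' ▸ J.neg_mem p.2.2⟩
      rw [hIJ, LieSubmodule.mem_bot] at hI
      rw [hI, zero_eq_neg] at hp'
      exact Prod.ext (Subtype.ext hI) (Subtype.ext hp'),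
    fun z => by
      obtain ⟨a, ha, b, hb, hab⟩ := (LieSubmodule.mem_sup I J _).mp z.2
      exact ⟨(⟨a, ha⟩, ⟨b, hb⟩), Subtype.ext hab⟩⟩

section Quotient

variable {L' : Type*} [LieRing L'] [LieAlgebra R L'] {I J : LieIdeal R L}
  {κ : L →ₗ⁅R⁆ L'} {φ : L ⧸ I →ₗ⁅R⁆ L'}

noncomputable def equivKerOfInfEqBot (hφκ : ∀ x, φ (LieSubmodule.Quotient.mk x) = κ x)
    (hIJ : I ⊓ J = ⊥) (hsup : I ⊔ J = κ.ker) : J ≃ₗ⁅R⁆ φ.ker :=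
  LieEquiv.ofBijective
    { toFun := fun y => ⟨LieSubmodule.Quotient.mk (y : L), by
        have : (y : L) ∈ I ⊔ J := LieSubmodule.mem_sup_right y.2
        rw [hsup, LieHom.mem_ker] at this
        exact LieHom.mem_ker.mpr ((hφκ y).trans this)⟩
      map_add' := fun _ _ => rfl
      map_smul' := fun _ _ => rfl
      map_lie' := rfl }
    ⟨(injective_iff_map_eq_zero _).mpr fun y hy => by
      have hJ : (y : L) ∈ I ⊓ J :=
        ⟨LieSubmodule.Quotient.mk_eq_zero'.mp (congrArg Subtype.val hy), y.2⟩
      rw [hIJ, LieSubmodule.mem_bot] at hJ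
      exact Subtype.ext hJ,
    fun q => by
      obtain ⟨x, hx⟩ := LieSubmodule.Quotient.surjective_mk' I (q : L ⧸ I)
      change LieSubmodule.Quotient.mk x = (q : L ⧸ I) at hx
      have hxker : x ∈ I ⊔ J := by
        rw [hsup, LieHom.mem_ker, ← hφκ]
        exact hx ▸ LieHom.mem_ker.mp q.2
      obtain ⟨a, ha, b, hb, rfl⟩ := (LieSubmodule.mem_sup I J x).mp hxker
      refine ⟨⟨b, hb⟩, Subtype.ext ?_⟩
      change LieSubmodule.Quotient.mk' I b = (q : L ⧸ I)
      rw [← hx, ← LieSubmodule.Quotient.mk'_apply, map_add,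
        (LieSubmodule.Quotient.mk_eq_zero I).mpr ha, zero_add]⟩

end Quotient

theorem exists_inf_eq_bot_sup_eq_of_le_center {K L : Type*} [Field K] [LieRing L]
    [LieAlgebra K L] {I J : LieIdeal K L} (hIJ : I ≤ J) (hJ : J ≤ center K L) :
    ∃ W : LieIdeal K L, I ⊓ W = ⊥ ∧ I ⊔ W = J := by
  obtain ⟨W, hdisj, hsup⟩ := IsModularLattice.exists_disjoint_and_sup_eq
    (show LieSubmodule.toSubmodule I ≤ LieSubmodule.toSubmodule J from hIJ)
  have hWc : ∀ y ∈ W, ∀ x : L, ⁅x, y⁆ = 0 := fun y hy =>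
    have hyJ : y ∈ LieSubmodule.toSubmodule J := hsup ▸ Submodule.mem_sup_right hy
    (LieModule.mem_maxTrivSubmodule K L L y).mp (hJ hyJ)
  refine ⟨{ W with lie_mem := fun {x y} hy => by rw [hWc y hy x]; exact W.zero_mem }, ?_, ?_⟩
  · rw [← LieSubmodule.toSubmodule_inj, LieSubmodule.inf_toSubmodule]
    exact disjoint_iff.mp hdisj
  · rw [← LieSubmodule.toSubmodule_inj, LieSubmodule.sup_toSubmodule]
    exact hsup

end LieIdeal

theorem J2_isDirectSum_square_schurMultiplier_general (F : Type x) [Field F]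
    (L : Type v) (T : Type w) [LieRing L] [LieAlgebra F L]
    [LieRing T] [LieAlgebra F T]
    (h : L → L → T) (hh : IsUniversalLiePairing F L T h)
    (sq : LieIdeal F T)
    (hsq : (sq : Submodule F T) = Submodule.span F {z : T | ∃ l : L, z = h l l})
    (κ : T →ₗ⁅F⁆ L) (hκ : ∀ l l' : L, κ (h l l') = ⁅l, l'⁆)
    (κ' : (T ⧸ sq) →ₗ⁅F⁆ L)
    (hκ' : ∀ z : T, κ' (LieSubmodule.Quotient.mk (N := sq) z) = κ z) :
    ∃ W : LieIdeal F T, sq ⊓ W = ⊥ ∧ sq ⊔ W = κ.ker ∧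
      Nonempty (W ≃ₗ⁅F⁆ κ'.ker) ∧
      Nonempty (κ.ker ≃ₗ⁅F⁆ sq × κ'.ker) := by
  have hsq_le : sq ≤ κ.ker := by
    change (sq : Submodule F T) ≤ (κ.ker : Submodule F T)
    rw [hsq, Submodule.span_le]
    rintro _ ⟨l, rfl⟩
    exact LieHom.mem_ker.mpr ((hκ l l).trans (lie_self l))
  obtain ⟨W, hinf, hsup⟩ :=
    LieIdeal.exists_inf_eq_bot_sup_eq_of_le_center hsq_le (hh.ker_le_center κ hκ)
  have e : W ≃ₗ⁅F⁆ κ'.ker := LieIdeal.equivKerOfInfEqBot hκ' hinf hsup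
  refine ⟨W, hinf, hsup, ⟨e⟩, ⟨?_⟩⟩
  rw [← hsup]
  exact (LieIdeal.supEquivProd hinf).trans (LieEquiv.prodCongr LieEquiv.refl e)

/-- If `L/L²` is finite-dimensional then `J₂(L) ≅ (L□L) × M(L)`:
the kernel of `κ : L⊗L → L, l⊗l' ↦ [l,l']` is the internal direct sum of the
square `L□L` and a Lie ideal isomorphic to the Schur multiplier
`M(L) = ker (κ' : L∧L → L)`. -/
theorem J2_isDirectSum_square_schurMultiplier (F : Type x) [Field F]
    (L : Type v) (T : Type w) [LieRing L] [LieAlgebra F L]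
    [LieRing T] [LieAlgebra F T]
    (h : L → L → T) (hh : IsUniversalLiePairing F L T h)
    [FiniteDimensional F (L ⧸ ⁅(⊤ : LieIdeal F L), (⊤ : LieIdeal F L)⁆)]
    (sq : LieIdeal F T)
    (hsq : (sq : Submodule F T) = Submodule.span F {z : T | ∃ l : L, z = h l l})
    (κ : T →ₗ⁅F⁆ L) (hκ : ∀ l l' : L, κ (h l l') = ⁅l, l'⁆)
    (κ' : (T ⧸ sq) →ₗ⁅F⁆ L)
    (hκ' : ∀ z : T, κ' (LieSubmodule.Quotient.mk (N := sq) z) = κ z) :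
    ∃ W : LieIdeal F T, sq ⊓ W = ⊥ ∧ sq ⊔ W = κ.ker ∧
      Nonempty (W ≃ₗ⁅F⁆ κ'.ker) ∧
      Nonempty (κ.ker ≃ₗ⁅F⁆ sq × κ'.ker) :=
  J2_isDirectSum_square_schurMultiplier_general F L T h hh sq hsq κ hκ κ' hκ'
end

section
/- Let F be a free Lie algebra over a field, with universal Lie pairing h: F × F → F⊗F. Then the map F² → F∧F determined by [x,y] ↦ x∧y is a Lie algebra isomorphism; equivalently, the induced homomorphism κ': F∧F → F², x∧y ↦ [x,y], is an isomorphism. -/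
universe u v w x

/-!
The span of the elements `h a b` is closed under the bracket (`⁅a ⊗ b, c ⊗ d⁆ = ⁅a, b⁆ ⊗ ⁅c, d⁆`),
so it is a Lie subalgebra through which `h` factors; by universality it is everything. Hence the
image of `κ'` is spanned by the brackets `⁅a, b⁆`, i.e. it is `F²`.

For injectivity, relation (i) says that `(a, b) ↦ a ∧ b` is a 2-cocycle of `F` with trivial
coefficients in `F ∧ F`. Since `F` is free, the central extension it defines splits, so the cocycle
is a coboundary: there is a linear `ψ : F → F ∧ F` with `ψ ⁅a, b⁆ = a ∧ b`, and `ψ` is a left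
inverse of `κ'`.
-/

open LieModule.Cohomology

open Submodule in
theorem LieSubalgebra.coe_lieSpan_eq_span_of_lie_mem {R L : Type*} [CommRing R] [LieRing L]
    [LieAlgebra R L] {s : Set L} (hs : ∀ᵉ (x ∈ s) (y ∈ s), ⁅x, y⁆ ∈ s) :
    (lieSpan R L s : Submodule R L) = span R s := by
  suffices ∀ {x y}, x ∈ span R s → y ∈ span R s → ⁅x, y⁆ ∈ span R s by
    refine le_antisymm ?_ submodule_span_le_lieSpan
    change _ ≤ ({ span R s with lie_mem' := this } : LieSubalgebra R L)
    rw [lieSpan_le]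
    exact subset_span
  intro x y hx hy
  induction hx, hy using span_induction₂ with
  | mem_mem x y hx hy => exact subset_span (hs x hx y hy)
  | zero_left y hy => simp
  | zero_right x hx => simp
  | add_left x y z _ _ _ hx hy => simpa using add_mem hx hy
  | add_right x y z _ _ _ hx hy => simpa using add_mem hx hy
  | smul_left r x y _ _ h => simpa using smul_mem _ r h
  | smul_right r x y _ _ h => simpa using smul_mem _ r h

noncomputable def LieAlgebra.ofTwoCocycleProj {R L M : Type*} [CommRing R] [LieRing L]
    [LieAlgebra R L] [AddCommGroup M] [Module R M] [LieRingModule L M] [LieModule R L M]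
    (c : twoCocycle R L M) : LieAlgebra.ofTwoCocycle c →ₗ⁅R⁆ L where
  toFun z := ((LieAlgebra.ofProd c).symm z).1
  map_add' _ _ := rfl
  map_smul' _ _ := rfl
  map_lie' := rfl

namespace FreeLieAlgebra

variable {R X M : Type*} [CommRing R] [AddCommGroup M] [Module R M]
  [LieRingModule (FreeLieAlgebra R X) M] [LieModule R (FreeLieAlgebra R X) M]

theorem exists_d₁₂_eq (c : twoCocycle R (FreeLieAlgebra R X) M) :
    ∃ f : oneCochain R (FreeLieAlgebra R X) M, d₁₂ R _ M f = c := by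
  let φ : FreeLieAlgebra R X →ₗ⁅R⁆ LieAlgebra.ofTwoCocycle c :=
    lift R fun x => LieAlgebra.ofProd c (of R x, 0)
  have hφ : ∀ a, ((LieAlgebra.ofProd c).symm (φ a)).1 = a :=
    LieHom.congr_fun (show (LieAlgebra.ofTwoCocycleProj c).comp φ = LieHom.id from
      hom_ext fun x => congrArg (LieAlgebra.ofTwoCocycleProj c) (lift_of_apply _ x))
  let g : FreeLieAlgebra R X →ₗ[R] M :=
    { toFun a := ((LieAlgebra.ofProd c).symm (φ a)).2
      map_add' _ _ := by simp
      map_smul' _ _ := by simp }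
  have hg : ∀ a b, g ⁅a, b⁆ = (c : twoCochain R _ M) a b + ⁅a, g b⁆ - ⁅b, g a⁆ := fun a b => by
    simp only [g, LinearMap.coe_mk, AddHom.coe_mk, φ.map_lie, LieAlgebra.bracket_ofTwoCocycle,
      Equiv.symm_apply_apply, hφ, twoCochain_val_apply]
  refine ⟨-g, ?_⟩
  ext a b
  show d₁₂ R _ M (-g) a b = (c : twoCochain R _ M) a b
  simp only [d₁₂_apply_apply, LinearMap.neg_apply, lie_neg, hg]
  abel

theorem exists_linearMap_lie_eq [LieModule.IsTrivial (FreeLieAlgebra R X) M]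
    (c : twoCocycle R (FreeLieAlgebra R X) M) :
    ∃ ψ : FreeLieAlgebra R X →ₗ[R] M, ∀ a b, ψ ⁅a, b⁆ = (c : twoCochain R _ M) a b := by
  obtain ⟨f, hf⟩ := exists_d₁₂_eq c
  exact ⟨-f, fun a b => by rw [← hf, d₁₂_apply_apply_ofTrivial, LinearMap.neg_apply]⟩

end FreeLieAlgebra

namespace IsLiePairing

variable {K : Type u} [Field K] {L : Type v} {H : Type w} {H' : Type x}
  [LieRing L] [LieAlgebra K L] [LieRing H] [LieAlgebra K H] [LieRing H'] [LieAlgebra K H']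
  {ρ : L → L → H}

theorem comp (hρ : IsLiePairing K ρ) (f : H →ₗ⁅K⁆ H') : IsLiePairing K fun a b => f (ρ a b) where
  add_left l l' k := by rw [hρ.add_left, map_add]
  add_right l k k' := by rw [hρ.add_right, map_add]
  smul_left c l k := by rw [hρ.smul_left, map_smul]
  smul_right c l k := by rw [hρ.smul_right, map_smul]
  bracket_left l l' s := by rw [hρ.bracket_left, map_sub]
  bracket_right l s s' := by rw [hρ.bracket_right, map_sub]
  bracket_bracket l s l' s' := by rw [hρ.bracket_bracket, map_neg, f.map_lie]

theorem of_comp {f : H →ₗ⁅K⁆ H'} (hf : Function.Injective f)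
    (hρ : IsLiePairing K fun a b => f (ρ a b)) : IsLiePairing K ρ where
  add_left l l' k := hf <| by simpa using hρ.add_left l l' k
  add_right l k k' := hf <| by simpa using hρ.add_right l k k'
  smul_left c l k := hf <| by simpa using hρ.smul_left c l k
  smul_right c l k := hf <| by simpa using hρ.smul_right c l k
  bracket_left l l' s := hf <| by simpa using hρ.bracket_left l l' s
  bracket_right l s s' := hf <| by simpa using hρ.bracket_right l s s'
  bracket_bracket l s l' s' := hf <| by simpa using hρ.bracket_bracket l s l' s'

def toLinearMap₂ (hρ : IsLiePairing K ρ) : L →ₗ[K] L →ₗ[K] H :=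
  LinearMap.mk₂ K ρ hρ.add_left hρ.smul_left hρ.add_right hρ.smul_right

theorem neg_left (hρ : IsLiePairing K ρ) (l k : L) : ρ (-l) k = -ρ l k :=
  hρ.toLinearMap₂.map_neg₂ l k

theorem lie_eq_apply_lie (hρ : IsLiePairing K ρ) (a b c d : L) :
    ⁅ρ a b, ρ c d⁆ = ρ ⁅a, b⁆ ⁅c, d⁆ := by
  rw [← lie_skew a b, hρ.neg_left, hρ.bracket_bracket, neg_neg]

/-- Relation (i) of a Lie pairing is the 2-cocycle identity for trivial coefficients. -/
def toTwoCocycle (hρ : IsLiePairing K ρ) {M : Type*} [AddCommGroup M] [Module K M]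
    (f : H →ₗ[K] M) (hf : ∀ a, f (ρ a a) = 0) : twoCocycle K L (TrivialLieModule K L M) :=
  ⟨⟨hρ.toLinearMap₂.compr₂ ((TrivialLieModule.equiv K L M).symm.toLinearMap ∘ₗ f), hf⟩, by
    rw [mem_twoCocycle_iff_of_trivial]
    intro x y z
    show f (ρ x ⁅y, z⁆) = f (ρ ⁅x, y⁆ z) + f (ρ y ⁅x, z⁆)
    rw [hρ.bracket_left, map_sub, sub_add_cancel]⟩

end IsLiePairing

namespace IsUniversalLiePairing

variable {K : Type u} [Field K] {L : Type v} {T : Type w}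
  [LieRing L] [LieAlgebra K L] [LieRing T] [LieAlgebra K T] {h : L → L → T}

theorem existsUnique_lift (hh : IsUniversalLiePairing K L T h) {Q : Type w} [LieRing Q]
    [LieAlgebra K Q] {ρ : L → L → Q} (hρ : IsLiePairing K ρ) :
    ∃! ζ : T →ₗ⁅K⁆ Q, ∀ x y, ζ (h x y) = ρ x y := by
  let _ := (Equiv.ulift : ULift.{max u v} Q ≃ Q).lieRing
  let _ := (Equiv.ulift : ULift.{max u v} Q ≃ Q).lieAlgebra K
  let e : ULift.{max u v} Q ≃ₗ⁅K⁆ Q := Equiv.ulift.lieEquiv K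
  obtain ⟨ζ, hζ, huniq⟩ := hh.universal _ _ (hρ.comp e.symm.toLieHom)
  refine ⟨e.toLieHom.comp ζ, fun x y => by simp [hζ], fun ζ' hζ' => ?_⟩
  have := huniq (e.symm.toLieHom.comp ζ') (by simp [hζ'])
  ext t
  simp [← this]

theorem lieSpan_eq_top (hh : IsUniversalLiePairing K L T h) :
    LieSubalgebra.lieSpan K T (Set.range (Function.uncurry h)) = ⊤ := by
  set S := LieSubalgebra.lieSpan K T (Set.range (Function.uncurry h))
  let h' : L → L → S := fun a b => ⟨h a b, LieSubalgebra.subset_lieSpan ⟨(a, b), rfl⟩⟩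
  obtain ⟨ζ, hζ, -⟩ := hh.existsUnique_lift
    (IsLiePairing.of_comp (f := S.incl) Subtype.val_injective hh.isLiePairing : IsLiePairing K h')
  have hid : S.incl.comp ζ = LieHom.id :=
    (hh.existsUnique_lift hh.isLiePairing).unique (fun x y => by simp [hζ, h']) (fun _ _ => rfl)
  rw [eq_top_iff]
  intro t _
  have ht : (ζ t : T) = t := LieHom.congr_fun hid t
  exact ht ▸ (ζ t).2

theorem span_eq_top (hh : IsUniversalLiePairing K L T h) :
    Submodule.span K (Set.range (Function.uncurry h)) = ⊤ := by
  rw [← LieSubalgebra.coe_lieSpan_eq_span_of_lie_mem, hh.lieSpan_eq_top,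
    LieSubalgebra.top_toSubmodule]
  rintro _ ⟨⟨a, b⟩, rfl⟩ _ ⟨⟨c, d⟩, rfl⟩
  exact ⟨(⁅a, b⁆, ⁅c, d⁆), (hh.isLiePairing.lie_eq_apply_lie a b c d).symm⟩

theorem range_eq_lie_top_top (hh : IsUniversalLiePairing K L T h) (g : T →ₗ[K] L)
    (hg : ∀ a b, g (h a b) = ⁅a, b⁆) :
    Set.range g = (⁅(⊤ : LieIdeal K L), (⊤ : LieIdeal K L)⁆ : LieIdeal K L) := by
  rw [← LinearMap.coe_range, ← LieSubmodule.coe_toSubmodule,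
    LieSubmodule.lieIdeal_oper_eq_linear_span', LinearMap.range_eq_map, ← hh.span_eq_top,
    Submodule.map_span, ← Set.range_comp]
  congr
  ext z
  simp [hg]

end IsUniversalLiePairing

/-- For a free Lie algebra `F` (on a set `X`), the homomorphism
`κ' : F∧F → F²`, `x∧y ↦ [x,y]`, is an isomorphism of `F∧F` onto the derived
subalgebra `F²`; equivalently the map `F² → F∧F` determined by
`[x,y] ↦ x∧y` is a Lie algebra isomorphism. -/
theorem freeLieAlgebra_exteriorSquare_iso_derived (K : Type u) [Field K]
    (X : Type v) (T : Type w) [LieRing T] [LieAlgebra K T]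
    (h : FreeLieAlgebra K X → FreeLieAlgebra K X → T)
    (hh : IsUniversalLiePairing K (FreeLieAlgebra K X) T h)
    (sq : LieIdeal K T)
    (hsq : (sq : Submodule K T) =
      Submodule.span K {z : T | ∃ a : FreeLieAlgebra K X, z = h a a})
    (κ' : (T ⧸ sq) →ₗ⁅K⁆ FreeLieAlgebra K X)
    (hκ' : ∀ x y : FreeLieAlgebra K X,
      κ' (LieSubmodule.Quotient.mk (N := sq) (h x y)) = ⁅x, y⁆) :
    Function.Injective κ' ∧
      Set.range κ' =
        (⁅(⊤ : LieIdeal K (FreeLieAlgebra K X)),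
          (⊤ : LieIdeal K (FreeLieAlgebra K X))⁆ :
            LieIdeal K (FreeLieAlgebra K X)) := by
  let q : T →ₗ[K] T ⧸ sq := (LieSubmodule.Quotient.mk' sq).toLinearMap
  have hq : ∀ a, q (h a a) = 0 := fun a => by
    have : h a a ∈ (sq : Submodule K T) := hsq ▸ Submodule.subset_span ⟨a, rfl⟩
    exact (LieSubmodule.Quotient.mk_eq_zero sq).2 this
  obtain ⟨ψ, hψ⟩ := FreeLieAlgebra.exists_linearMap_lie_eq (hh.isLiePairing.toTwoCocycle q hq)
  have hψκ' : (TrivialLieModule.equiv K _ _).toLinearMap ∘ₗ ψ ∘ₗ κ'.toLinearMap ∘ₗ q = q :=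
    LinearMap.ext_on hh.span_eq_top <| by
      rintro _ ⟨⟨a, b⟩, rfl⟩
      exact (congrArg ψ (hκ' a b)).trans (hψ a b)
  have hleft : Function.LeftInverse ψ κ' := fun z => by
    obtain ⟨t, rfl⟩ := LieSubmodule.Quotient.surjective_mk' sq z
    exact LinearMap.congr_fun hψκ' t
  refine ⟨hleft.injective, ?_⟩
  rw [← (LieSubmodule.Quotient.surjective_mk' sq).range_comp]
  exact hh.range_eq_lie_top_top (κ'.toLinearMap ∘ₗ q) hκ'
end
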